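/- Let (X,ρ,μ) be a space of homogeneous type, let φ : X × (0,∞) → (0,∞) belong to 𝒢^dec_1 and satisfy the nearness condition, and let Φ be a strictly increasing Orlicz function of positive lower type and finite positive upper type. Then there exists a positive constant C such that for every ball B ⊆ X, the indicator 𝟏_B satisfies 1/Φ⁻¹(φ(B)) ≤ ‖𝟏_B‖_{L^{(Φ,φ)}(X)} ≤ C/Φ⁻¹(φ(B)). -/

import Mathlib

noncomputable section

open MeasureTheory Filter Set
open scoped ENNReal NNReal Topology

namespace Paper

variable {X : Type*} [MeasurableSpace X]

/-- The ball with center `x` and radius `r` for the quasi-metric `ρ`. -/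
def ball (ρ : X → X → ℝ) (x : X) (r : ℝ) : Set X := {y | ρ x y < r}

/-- `(X, ρ, μ)` is a quasi-metric measure space with quasi-triangle constant `K₀`:
`ρ` is a quasi-metric with constant `K₀` and all `ρ`-balls are `μ`-measurable. -/
structure IsQuasiMetricMeasure (ρ : X → X → ℝ) (μ : Measure X) (K₀ : ℝ) : Prop where
  nonneg : ∀ x y, 0 ≤ ρ x y
  eq_zero_iff : ∀ x y, ρ x y = 0 ↔ x = y
  symm : ∀ x y, ρ x y = ρ y x
  one_le : 1 ≤ K₀
  triangle : ∀ x y z, ρ x z ≤ K₀ * (ρ x y + ρ y z)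
  measurableSet_ball : ∀ x r, MeasurableSet (ball ρ x r)

/-- The doubling condition for `μ` with doubling constant `L ∈ [1, ∞)`. -/
def IsDoubling (ρ : X → X → ℝ) (μ : Measure X) (L : ℝ≥0∞) : Prop :=
  1 ≤ L ∧ L < ∞ ∧ ∀ (x : X) (r : ℝ), 0 < r →
    0 < μ (ball ρ x r) ∧ μ (ball ρ x (2 * r)) ≤ L * μ (ball ρ x r) ∧ μ (ball ρ x r) < ∞

/-- `Φ` is an Orlicz function (conditions imposed on `[0,∞)`). -/
structure OrliczFun (Φ : ℝ → ℝ) : Prop where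
  zero : Φ 0 = 0
  nonneg : ∀ t, 0 ≤ t → 0 ≤ Φ t
  mono : ∀ s t, 0 ≤ s → s ≤ t → Φ s ≤ Φ t
  pos : ∀ t, 0 < t → 0 < Φ t
  tendsto_atTop : Tendsto Φ atTop atTop

/-- `Φ` is of lower type `r`. -/
def LowerType (Φ : ℝ → ℝ) (r : ℝ) : Prop :=
  ∃ C : ℝ, 1 ≤ C ∧ ∀ t s : ℝ, 0 < t → 0 < s → s < 1 → Φ (s * t) ≤ C * s ^ r * Φ t

/-- `Φ` is of upper type `r`. -/
def UpperType (Φ : ℝ → ℝ) (r : ℝ) : Prop :=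
  ∃ C : ℝ, 1 ≤ C ∧ ∀ t s : ℝ, 0 < t → 1 < s → Φ (s * t) ≤ C * s ^ r * Φ t

/-- The canonical extension of `Φ` to `ℝ≥0∞`. -/
def extO (Φ : ℝ → ℝ) (t : ℝ≥0∞) : ℝ≥0∞ :=
  if t = ∞ then ∞ else ENNReal.ofReal (Φ t.toReal)

/-- The generalized inverse of `Φ`. -/
def invO (Φ : ℝ → ℝ) (u : ℝ) : ℝ :=
  sInf {t : ℝ | 0 ≤ t ∧ u ≤ Φ t}

/-- `‖f‖_{Φ,φ,B}` for the ball `B = B(x,r)`: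
the least `λ` with `μ(B)⁻¹ ∫_B Φ(|f|/λ) dμ ≤ φ(B)`. -/
def ballNorm (ρ : X → X → ℝ) (μ : Measure X) (Φ : ℝ → ℝ) (φ : X → ℝ → ℝ)
    (x : X) (r : ℝ) (g : X → ℝ≥0∞) : ℝ≥0∞ :=
  sInf {lam : ℝ≥0∞ | lam ≠ 0 ∧
    (∫⁻ y in ball ρ x r, extO Φ (g y / lam) ∂μ) ≤
      ENNReal.ofReal (φ x r) * μ (ball ρ x r)}

/-- The generalized Orlicz–Morrey quasi-norm `‖f‖_{L^{(Φ,φ)}(X)}`. -/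
def OMnorm (ρ : X → X → ℝ) (μ : Measure X) (Φ : ℝ → ℝ) (φ : X → ℝ → ℝ)
    (g : X → ℝ≥0∞) : ℝ≥0∞ :=
  ⨆ (x : X) (r : ℝ) (_ : 0 < r), ballNorm ρ μ Φ φ x r g

/-- `φ` takes values in `(0,∞)`. -/
def PhiPos (φ : X → ℝ → ℝ) : Prop := ∀ (x : X) (r : ℝ), 0 < r → 0 < φ x r

/-- The nearness condition for `φ`. -/
def Nearness (ρ : X → X → ℝ) (φ : X → ℝ → ℝ) : Prop :=
  ∃ C : ℝ, 1 ≤ C ∧ ∀ (x y : X) (r : ℝ), 0 < r → ρ x y ≤ r → φ x r ≤ C * φ y r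

/-- `φ ∈ 𝒢^dec_1`: `r ↦ μ(B(x,r))φ(x,r)` is almost increasing and
`r ↦ φ(x,r)` is almost decreasing. -/
def Gdec1 (ρ : X → X → ℝ) (μ : Measure X) (φ : X → ℝ → ℝ) : Prop :=
  ∃ C : ℝ, 1 ≤ C ∧ ∀ (x : X) (r s : ℝ), 0 < r → r ≤ s →
    μ (ball ρ x r) * ENNReal.ofReal (φ x r) ≤
        ENNReal.ofReal C * (μ (ball ρ x s) * ENNReal.ofReal (φ x s)) ∧
      φ x s ≤ C * φ x r

/-!
The lower bound is read off the ball `B` itself: every `λ` admissible for `‖𝟏_B‖_{Φ,φ,B}` has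
`Φ(1/λ) ≤ φ(B)`, hence `1/λ ≤ Φ⁻¹(φ(B))` since `Φ` is strictly increasing.

For the upper bound, the Orlicz average of `𝟏_B / λ` over another ball `B'` is
`Φ(1/λ) μ(B ∩ B') / μ(B')`. Whenever `B = B(x,r)` meets `B' = B(y,s)`, comparing both balls with
a ball of radius `≈ K₀ max(r,s)` through the quasi-triangle inequality, doubling, nearness and
`𝒢^dec_1` gives `μ(B ∩ B') φ(B) ≤ A μ(B') φ(B')`. The positive lower type of `Φ` provides `ε > 0`
with `A Φ(ε t) ≤ Φ(t)`, so `λ = 2 / (ε Φ⁻¹(φ(B)))` is admissible on every ball.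
-/

variable {ρ : X → X → ℝ} {μ : Measure X} {K₀ : ℝ} {L : ℝ≥0∞} {φ : X → ℝ → ℝ} {Φ : ℝ → ℝ}

lemma ball_mono {Y : Type*} (ρ : Y → Y → ℝ) (x : Y) {r s : ℝ} (h : r ≤ s) :
    ball ρ x r ⊆ ball ρ x s :=
  fun _ hw => lt_of_lt_of_le hw h

namespace IsQuasiMetricMeasure

lemma ball_subset_ball (hX : IsQuasiMetricMeasure ρ μ K₀) (x y : X) (t : ℝ) :
    ball ρ x t ⊆ ball ρ y (K₀ * (ρ x y + t)) := by
  intro w (hw : ρ x w < t)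
  have hK₀ : 0 < K₀ := zero_lt_one.trans_le hX.one_le
  calc ρ y w ≤ K₀ * (ρ y x + ρ x w) := hX.triangle y x w
    _ < K₀ * (ρ x y + t) := by rw [hX.symm y x]; gcongr

lemma dist_lt_of_inter_nonempty (hX : IsQuasiMetricMeasure ρ μ K₀) {x y : X} {r s : ℝ}
    (h : (ball ρ x r ∩ ball ρ y s).Nonempty) : ρ x y < K₀ * (r + s) := by
  obtain ⟨z, hxz, hyz⟩ := h
  have hK₀ : 0 < K₀ := zero_lt_one.trans_le hX.one_le
  calc ρ x y ≤ K₀ * (ρ x z + ρ z y) := hX.triangle x z y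
    _ < K₀ * (r + s) := by
      rw [hX.symm z y]
      exact mul_lt_mul_of_pos_left (add_lt_add hxz hyz) hK₀

end IsQuasiMetricMeasure

namespace IsDoubling

lemma measure_ball_two_pow_mul_le (hL : IsDoubling ρ μ L) (x : X) {r : ℝ} (hr : 0 < r) (k : ℕ) :
    μ (ball ρ x (2 ^ k * r)) ≤ L ^ k * μ (ball ρ x r) := by
  induction k with
  | zero => simp
  | succ k ih =>
    calc μ (ball ρ x (2 ^ (k + 1) * r)) = μ (ball ρ x (2 * (2 ^ k * r))) := by ring_nf
      _ ≤ L * μ (ball ρ x (2 ^ k * r)) := (hL.2.2 x _ (by positivity)).2.1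
      _ ≤ L * (L ^ k * μ (ball ρ x r)) := by gcongr
      _ = L ^ (k + 1) * μ (ball ρ x r) := by ring

lemma exists_measure_ball_le (hL : IsDoubling ρ μ L) (a : ℝ) :
    ∃ D : ℝ, 0 < D ∧ ∀ (x : X) (r t : ℝ), 0 < r → t ≤ a * r →
      μ (ball ρ x t) ≤ ENNReal.ofReal D * μ (ball ρ x r) := by
  obtain ⟨k, hk⟩ := pow_unbounded_of_one_lt a one_lt_two
  have hL₀ : L ≠ 0 := (zero_lt_one.trans_le hL.1).ne'
  refine ⟨L.toReal ^ k, pow_pos (ENNReal.toReal_pos hL₀ hL.2.1.ne) k, fun x r t hr ht => ?_⟩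
  calc μ (ball ρ x t) ≤ μ (ball ρ x (2 ^ k * r)) :=
        measure_mono (ball_mono ρ x (ht.trans (by gcongr)))
    _ ≤ L ^ k * μ (ball ρ x r) := hL.measure_ball_two_pow_mul_le x hr k
    _ = ENNReal.ofReal (L.toReal ^ k) * μ (ball ρ x r) := by
      rw [ENNReal.ofReal_pow ENNReal.toReal_nonneg, ENNReal.ofReal_toReal hL.2.1.ne]

end IsDoubling

lemma Nearness.exists_le_of_le (hN : Nearness ρ φ) (hG : Gdec1 ρ μ φ) :
    ∃ C : ℝ, 0 < C ∧ ∀ (x y : X) (s t : ℝ), 0 < s → s ≤ t → ρ x y ≤ t → φ x t ≤ C * φ y s := by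
  obtain ⟨CN, hCN, hN⟩ := hN
  obtain ⟨CG, hCG, hG⟩ := hG
  refine ⟨CN * CG, by positivity, fun x y s t hs hst hxy => ?_⟩
  calc φ x t ≤ CN * φ y t := hN x y t (hs.trans_le hst) hxy
    _ ≤ CN * (CG * φ y s) := by gcongr; exact (hG y s t hs hst).2
    _ = CN * CG * φ y s := by ring

lemma Gdec1.exists_le_of_le_mul (hG : Gdec1 ρ μ φ) (hL : IsDoubling ρ μ L) (a : ℝ) :
    ∃ C : ℝ, 0 < C ∧ ∀ (x : X) (r t : ℝ), 0 < r → r ≤ t → t ≤ a * r →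
      ENNReal.ofReal (φ x r) ≤ ENNReal.ofReal C * ENNReal.ofReal (φ x t) := by
  obtain ⟨D, hD, hμ⟩ := hL.exists_measure_ball_le a
  obtain ⟨CG, hCG, hG⟩ := hG
  refine ⟨CG * D, by positivity, fun x r t hr hrt hta => ?_⟩
  have hμ₀ := hL.2.2 x r hr
  rw [← ENNReal.mul_le_mul_iff_right hμ₀.1.ne' hμ₀.2.2.ne]
  calc μ (ball ρ x r) * ENNReal.ofReal (φ x r)
      ≤ ENNReal.ofReal CG * (μ (ball ρ x t) * ENNReal.ofReal (φ x t)) := (hG x r t hr hrt).1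
    _ ≤ ENNReal.ofReal CG * (ENNReal.ofReal D * μ (ball ρ x r) * ENNReal.ofReal (φ x t)) := by
      gcongr
      exact hμ x r t hr hta
    _ = μ (ball ρ x r) * (ENNReal.ofReal (CG * D) * ENNReal.ofReal (φ x t)) := by
      rw [ENNReal.ofReal_mul (by positivity)]; ring

lemma exists_measure_inter_mul_le (hX : IsQuasiMetricMeasure ρ μ K₀) (hL : IsDoubling ρ μ L)
    (hG : Gdec1 ρ μ φ) (hN : Nearness ρ φ) :
    ∃ A : ℝ, 0 < A ∧ ∀ (x y : X) (r s : ℝ), 0 < r → 0 < s →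
      (ball ρ x r ∩ ball ρ y s).Nonempty →
        μ (ball ρ x r ∩ ball ρ y s) * ENNReal.ofReal (φ x r) ≤
          ENNReal.ofReal A * (μ (ball ρ y s) * ENNReal.ofReal (φ y s)) := by
  obtain ⟨C, hC, hφ⟩ := hN.exists_le_of_le hG
  obtain ⟨C₁, hC₁, hφ₁⟩ := hG.exists_le_of_le_mul hL (2 * K₀)
  obtain ⟨D, hD, hμ⟩ := hL.exists_measure_ball_le (4 * K₀ ^ 2)
  obtain ⟨CG, hCG, hG⟩ := hG
  have hK₀ := hX.one_le
  refine ⟨max (C₁ * C) (CG * D * C), by positivity, fun x y r s hr hs hxy => ?_⟩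
  have hρ := hX.dist_lt_of_inter_nonempty hxy
  rcases le_total s r with hsr | hrs
  · set t := 2 * K₀ * r
    have hrt : r ≤ t := by nlinarith
    have hφt : φ x t ≤ C * φ y s := hφ x y s t hs (hsr.trans hrt) (by nlinarith)
    calc μ (ball ρ x r ∩ ball ρ y s) * ENNReal.ofReal (φ x r)
        ≤ μ (ball ρ y s) * (ENNReal.ofReal C₁ * ENNReal.ofReal (C * φ y s)) := by
          gcongr
          · exact inter_subset_right
          · exact (hφ₁ x r t hr hrt le_rfl).trans (by gcongr)
      _ = ENNReal.ofReal (C₁ * C) * (μ (ball ρ y s) * ENNReal.ofReal (φ y s)) := by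
          rw [ENNReal.ofReal_mul hC₁.le, ENNReal.ofReal_mul hC.le]; ring
      _ ≤ _ := by gcongr; exact le_max_left _ _
  · set t := 2 * K₀ * s
    have hst : s ≤ t := by nlinarith
    have hφt : φ x t ≤ C * φ y s := hφ x y s t hs hst (by nlinarith)
    have hμt : μ (ball ρ x t) ≤ ENNReal.ofReal D * μ (ball ρ y s) :=
      (measure_mono (hX.ball_subset_ball x y t)).trans (hμ y s _ hs (by nlinarith))
    calc μ (ball ρ x r ∩ ball ρ y s) * ENNReal.ofReal (φ x r)
        ≤ μ (ball ρ x r) * ENNReal.ofReal (φ x r) := by gcongr; exact inter_subset_left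
      _ ≤ ENNReal.ofReal CG * (μ (ball ρ x t) * ENNReal.ofReal (φ x t)) :=
          (hG x r t hr (hrs.trans hst)).1
      _ ≤ ENNReal.ofReal CG *
            (ENNReal.ofReal D * μ (ball ρ y s) * ENNReal.ofReal (C * φ y s)) := by
          gcongr
      _ = ENNReal.ofReal (CG * D * C) * (μ (ball ρ y s) * ENNReal.ofReal (φ y s)) := by
          rw [ENNReal.ofReal_mul hC.le, ENNReal.ofReal_mul (by positivity : 0 ≤ CG * D),
            ENNReal.ofReal_mul (by positivity : 0 ≤ CG)]
          ring
      _ ≤ _ := by gcongr; exact le_max_right _ _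

lemma LowerType.exists_mul_le (hΦ : OrliczFun Φ) {p : ℝ} (hlt : LowerType Φ p) (hp : 0 < p)
    {A : ℝ} (hA : 0 < A) : ∃ ε : ℝ, 0 < ε ∧ ∀ t, 0 < t → A * Φ (ε * t) ≤ Φ t := by
  obtain ⟨C, hC, hlt⟩ := hlt
  set M := max 2 (C * A)
  have hM : 1 < M := one_lt_two.trans_le (le_max_left _ _)
  have hCAM : C * A * M⁻¹ ≤ 1 := by
    rw [← div_eq_mul_inv, div_le_one (by positivity)]
    exact le_max_right _ _
  have hε : M⁻¹ ^ p⁻¹ < 1 :=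
    Real.rpow_lt_one (by positivity) (inv_lt_one_of_one_lt₀ hM) (by positivity)
  have hεp : (M⁻¹ ^ p⁻¹) ^ p = M⁻¹ := by
    rw [← Real.rpow_mul (by positivity), inv_mul_cancel₀ hp.ne', Real.rpow_one]
  refine ⟨M⁻¹ ^ p⁻¹, by positivity, fun t ht => ?_⟩
  have hΦt := hΦ.nonneg t ht.le
  calc A * Φ (M⁻¹ ^ p⁻¹ * t) ≤ A * (C * M⁻¹ * Φ t) := by
        gcongr
        simpa only [hεp] using hlt t _ ht (by positivity) hε
    _ = C * A * M⁻¹ * Φ t := by ring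
    _ ≤ Φ t := mul_le_of_le_one_left hΦt hCAM

lemma OrliczFun.nonempty_invO_set (hΦ : OrliczFun Φ) (u : ℝ) :
    {t : ℝ | 0 ≤ t ∧ u ≤ Φ t}.Nonempty := by
  obtain ⟨t, hut, ht⟩ :=
    ((hΦ.tendsto_atTop.eventually_ge_atTop u).and (eventually_ge_atTop 0)).exists
  exact ⟨t, ht, hut⟩

lemma lt_of_lt_invO {u t : ℝ} (ht : 0 ≤ t) (htu : t < invO Φ u) : Φ t < u := by
  by_contra! h
  exact notMem_of_lt_csInf htu ⟨0, fun _ hs => hs.1⟩ ⟨ht, h⟩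

lemma le_invO (hΦ : OrliczFun Φ) (hΦmono : StrictMonoOn Φ (Ici 0)) {u v : ℝ} (hv : 0 ≤ v)
    (hΦv : Φ v ≤ u) : v ≤ invO Φ u := by
  by_contra! h
  obtain ⟨t, ⟨ht, hut⟩, htv⟩ := exists_lt_of_csInf_lt (hΦ.nonempty_invO_set u) h
  exact (hΦv.trans hut).not_gt (hΦmono ht hv htv)

lemma invO_pos (hΦ : OrliczFun Φ) {p : ℝ} (hlt : LowerType Φ p) (hp : 0 < p) {u : ℝ}
    (hu : 0 < u) : 0 < invO Φ u := by
  have hΦ₁ := hΦ.pos 1 one_pos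
  obtain ⟨ε, hε, hεΦ⟩ := hlt.exists_mul_le hΦ hp (show 0 < 2 * Φ 1 / u by positivity)
  have hΦε : Φ ε < u := by
    have h := hεΦ 1 one_pos
    rw [mul_one, div_mul_eq_mul_div, div_le_iff₀ hu] at h
    nlinarith
  refine hε.trans_le (le_csInf (hΦ.nonempty_invO_set u) fun t ⟨ht, hut⟩ => ?_)
  by_contra! htε
  exact (hΦε.trans_le hut).not_ge (hΦ.mono t ε ht htε.le)

lemma extO_of_ne_top {t : ℝ≥0∞} (ht : t ≠ ∞) : extO Φ t = ENNReal.ofReal (Φ t.toReal) :=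
  if_neg ht

lemma lintegral_extO_indicator_div (hΦ₀ : Φ 0 = 0) {B : Set X} (hB : MeasurableSet B)
    (B' : Set X) (lam : ℝ≥0∞) :
    ∫⁻ y in B', extO Φ (B.indicator (fun _ => 1) y / lam) ∂μ = extO Φ (1 / lam) * μ (B ∩ B') := by
  have h : ∀ y, extO Φ (B.indicator (fun _ => 1) y / lam) =
      B.indicator (fun _ => extO Φ (1 / lam)) y := by
    intro y
    by_cases hy : y ∈ B
    · simp only [indicator_of_mem hy]
    · simp [indicator_of_notMem hy, extO, hΦ₀]
  simp_rw [h]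
  rw [lintegral_indicator hB, setLIntegral_const, Measure.restrict_apply hB]

lemma le_ballNorm_indicator_ball (hΦ : OrliczFun Φ) (hΦmono : StrictMonoOn Φ (Ici 0))
    {x : X} {r : ℝ} (hφ : 0 < φ x r) (hB : MeasurableSet (ball ρ x r))
    (hμ₀ : μ (ball ρ x r) ≠ 0) (hμ : μ (ball ρ x r) ≠ ∞) :
    ENNReal.ofReal (1 / invO Φ (φ x r)) ≤
      ballNorm ρ μ Φ φ x r ((ball ρ x r).indicator fun _ => 1) := by
  refine le_sInf fun lam ⟨hlam₀, hlam⟩ => ?_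
  rcases eq_or_ne lam ∞ with rfl | hlam_top
  · exact le_top
  have hlam_pos : 0 < lam.toReal := ENNReal.toReal_pos hlam₀ hlam_top
  rw [lintegral_extO_indicator_div hΦ.zero hB, inter_self,
    ENNReal.mul_le_mul_iff_left hμ₀ hμ, extO_of_ne_top (by simpa using hlam₀),
    ENNReal.ofReal_le_ofReal_iff hφ.le, one_div, ENNReal.toReal_inv] at hlam
  have hinv := le_invO hΦ hΦmono (by positivity) hlam
  calc ENNReal.ofReal (1 / invO Φ (φ x r)) ≤ ENNReal.ofReal (1 / lam.toReal⁻¹) := by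
        gcongr
    _ = lam := by rw [one_div, inv_inv, ENNReal.ofReal_toReal hlam_top]

lemma ballNorm_le_OMnorm {x : X} {r : ℝ} (hr : 0 < r) (g : X → ℝ≥0∞) :
    ballNorm ρ μ Φ φ x r g ≤ OMnorm ρ μ Φ φ g :=
  le_iSup₂_of_le x r (le_iSup (fun _ => ballNorm ρ μ Φ φ x r g) hr)

lemma ballNorm_indicator_le (hΦ₀ : Φ 0 = 0) {x y : X} {r s : ℝ} (hB : MeasurableSet (ball ρ x r))
    {A lam : ℝ} (hA : 0 < A) (hlam : 0 < lam) (hΦlam : A * Φ lam⁻¹ ≤ φ x r)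
    (hxy : (ball ρ x r ∩ ball ρ y s).Nonempty →
      μ (ball ρ x r ∩ ball ρ y s) * ENNReal.ofReal (φ x r) ≤
        ENNReal.ofReal A * (μ (ball ρ y s) * ENNReal.ofReal (φ y s))) :
    ballNorm ρ μ Φ φ y s ((ball ρ x r).indicator fun _ => 1) ≤ ENNReal.ofReal lam := by
  have hlam₀ : ENNReal.ofReal lam ≠ 0 := (ENNReal.ofReal_pos.2 hlam).ne'
  refine sInf_le ⟨hlam₀, ?_⟩
  rw [lintegral_extO_indicator_div hΦ₀ hB, extO_of_ne_top (by simpa using hlam₀), one_div,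
    ENNReal.toReal_inv, ENNReal.toReal_ofReal hlam.le]
  rcases (ball ρ x r ∩ ball ρ y s).eq_empty_or_nonempty with h | h
  · simp [h]
  rw [← ENNReal.mul_le_mul_iff_right (ENNReal.ofReal_pos.2 hA).ne' ENNReal.ofReal_ne_top]
  calc ENNReal.ofReal A * (ENNReal.ofReal (Φ lam⁻¹) * μ (ball ρ x r ∩ ball ρ y s))
      = ENNReal.ofReal (A * Φ lam⁻¹) * μ (ball ρ x r ∩ ball ρ y s) := by
        rw [ENNReal.ofReal_mul hA.le, mul_assoc]
    _ ≤ ENNReal.ofReal (φ x r) * μ (ball ρ x r ∩ ball ρ y s) := by gcongr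
    _ ≤ ENNReal.ofReal A * (μ (ball ρ y s) * ENNReal.ofReal (φ y s)) := by
        rw [mul_comm]; exact hxy h
    _ = ENNReal.ofReal A * (ENNReal.ofReal (φ y s) * μ (ball ρ y s)) := by rw [mul_comm (μ _)]

theorem statement15_general (ρ : X → X → ℝ) (μ : Measure X) (K₀ : ℝ) (L : ℝ≥0∞)
    (hX : IsQuasiMetricMeasure ρ μ K₀) (hL : IsDoubling ρ μ L)
    (φ : X → ℝ → ℝ) (hφpos : PhiPos φ) (hφG : Gdec1 ρ μ φ) (hφN : Nearness ρ φ)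
    (Φ : ℝ → ℝ) (hΦ : OrliczFun Φ) (hΦmono : StrictMonoOn Φ (Set.Ici (0:ℝ)))
    (rminus : ℝ) (hrm : 0 < rminus)
    (hlt : LowerType Φ rminus) :
    ∃ C : ℝ, 0 < C ∧ ∀ (x : X) (r : ℝ), 0 < r →
      ENNReal.ofReal (1 / invO Φ (φ x r)) ≤
          OMnorm ρ μ Φ φ ((ball ρ x r).indicator fun _ => 1) ∧
        OMnorm ρ μ Φ φ ((ball ρ x r).indicator fun _ => 1) ≤
          ENNReal.ofReal (C / invO Φ (φ x r)) := by
  obtain ⟨A, hA, hkey⟩ := exists_measure_inter_mul_le hX hL hφG hφN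
  obtain ⟨ε, hε, hεΦ⟩ := hlt.exists_mul_le hΦ hrm hA
  refine ⟨2 / ε, by positivity, fun x r hr => ⟨?_, ?_⟩⟩
  · have hμ := hL.2.2 x r hr
    exact (le_ballNorm_indicator_ball hΦ hΦmono (hφpos x r hr) (hX.measurableSet_ball x r)
      hμ.1.ne' hμ.2.2.ne).trans (ballNorm_le_OMnorm hr _)
  · have ht₀ : 0 < invO Φ (φ x r) := invO_pos hΦ hlt hrm (hφpos x r hr)
    have hΦt₀ : A * Φ (2 / ε / invO Φ (φ x r))⁻¹ ≤ φ x r :=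
      calc A * Φ (2 / ε / invO Φ (φ x r))⁻¹ = A * Φ (ε * (invO Φ (φ x r) / 2)) := by
            congr 2; field_simp
        _ ≤ Φ (invO Φ (φ x r) / 2) := hεΦ _ (by positivity)
        _ ≤ φ x r := (lt_of_lt_invO (by positivity) (by linarith)).le
    exact iSup₂_le fun y s => iSup_le fun hs => ballNorm_indicator_le hΦ.zero
      (hX.measurableSet_ball x r) hA (by positivity) hΦt₀ (hkey x y r s hr hs)

theorem statement15 [Nonempty X] (ρ : X → X → ℝ) (μ : Measure X) (K₀ : ℝ) (L : ℝ≥0∞)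
    (hX : IsQuasiMetricMeasure ρ μ K₀) (hL : IsDoubling ρ μ L)
    (φ : X → ℝ → ℝ) (hφpos : PhiPos φ) (hφG : Gdec1 ρ μ φ) (hφN : Nearness ρ φ)
    (Φ : ℝ → ℝ) (hΦ : OrliczFun Φ) (hΦmono : StrictMonoOn Φ (Set.Ici (0:ℝ)))
    (rminus rplus : ℝ) (hrm : 0 < rminus) (hrp : 0 < rplus) (hrr : rminus ≤ rplus)
    (hlt : LowerType Φ rminus) (hut : UpperType Φ rplus) :
    ∃ C : ℝ, 0 < C ∧ ∀ (x : X) (r : ℝ), 0 < r →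
      ENNReal.ofReal (1 / invO Φ (φ x r)) ≤
          OMnorm ρ μ Φ φ ((ball ρ x r).indicator fun _ => 1) ∧
        OMnorm ρ μ Φ φ ((ball ρ x r).indicator fun _ => 1) ≤
          ENNReal.ofReal (C / invO Φ (φ x r)) :=
  statement15_general ρ μ K₀ L hX hL φ hφpos hφG hφN Φ hΦ hΦmono rminus hrm hlt
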